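/- The generating function Irr(z) of irreducible 3-noncrossing perfect matchings satisfies Irr(z) = 1 + Σ_{h≥1} S(h) · z^h · F_3(z)^{2h−1}; concretely, the constant coefficient of Irr(z) is 1 and, for every n ≥ 1, the coefficient of z^n in Irr(z) equals Σ_{h=1}^{n} S(h) · [z^{n−h}] F_3(z)^{2h−1}. -/

import Mathlib

open scoped Classical

noncomputable section

/-- A diagram on `n` vertices: a set of arcs `(i,j)` with `1 ≤ i < j ≤ n`
in which each vertex belongs to at most one arc. -/
structure Diagram (n : ℕ) where
  arcs : Finset (ℕ × ℕ)
  valid : ∀ a ∈ arcs, 1 ≤ a.1 ∧ a.1 < a.2 ∧ a.2 ≤ n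
  disj : ∀ a ∈ arcs, ∀ b ∈ arcs, a ≠ b →
    a.1 ≠ b.1 ∧ a.1 ≠ b.2 ∧ a.2 ≠ b.1 ∧ a.2 ≠ b.2

namespace Diagram

variable {n : ℕ}

/-- `D` contains a `k`-crossing: arcs `(i₁,j₁),…,(i_k,j_k)` with
`i₁ < i₂ < ⋯ < i_k < j₁ < j₂ < ⋯ < j_k`. -/
def HasCrossing (D : Diagram n) (k : ℕ) : Prop :=
  ∃ a : Fin k → ℕ × ℕ, (∀ t, a t ∈ D.arcs) ∧
    (∀ s t : Fin k, s < t → (a s).1 < (a t).1) ∧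
    (∀ s t : Fin k, s < t → (a s).2 < (a t).2) ∧
    (∀ s t : Fin k, (a s).1 < (a t).2)

/-- `D` is `k`-noncrossing: it has no `k`-crossing. -/
def Noncrossing (k : ℕ) (D : Diagram n) : Prop := ¬ D.HasCrossing k

/-- `D` is a perfect matching: it has no isolated vertices. -/
def Perfect (D : Diagram n) : Prop :=
  ∀ v : ℕ, 1 ≤ v → v ≤ n → ∃ a ∈ D.arcs, v = a.1 ∨ v = a.2

/-- `(i,j),(i+1,j-1),…,(i+σ-1,j-σ+1)` is a (maximal) stack of size `σ` in `D`. -/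
def IsStack (D : Diagram n) (i j σ : ℕ) : Prop :=
  0 < σ ∧ (∀ t < σ, (i + t, j - t) ∈ D.arcs) ∧
    (i - 1, j + 1) ∉ D.arcs ∧ (i + σ, j - σ) ∉ D.arcs

/-- Every stack of `D` has size at least `τ`. -/
def MinStack (τ : ℕ) (D : Diagram n) : Prop :=
  ∀ i j σ : ℕ, D.IsStack i j σ → τ ≤ σ

/-- Every arc of `D` has length at least `lam`. -/
def MinArcLength (lam : ℕ) (D : Diagram n) : Prop :=
  ∀ a ∈ D.arcs, lam ≤ a.2 - a.1

/-- A modular `k`-noncrossing diagram: `k`-noncrossing, every stack has size at least 2,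
and every arc has length at least 4. -/
def Modular (k : ℕ) (D : Diagram n) : Prop :=
  D.Noncrossing k ∧ MinStack 2 D ∧ MinArcLength 4 D

/-- Two arcs cross (i.e. form a 2-crossing). -/
def Crosses (a b : ℕ × ℕ) : Prop :=
  (a.1 < b.1 ∧ b.1 < a.2 ∧ a.2 < b.2) ∨ (b.1 < a.1 ∧ a.1 < b.2 ∧ b.2 < a.2)

/-- The number of 1-arcs (arcs of length 1) of `D`. -/
def oneArcs (D : Diagram n) : ℕ :=
  (D.arcs.filter fun a => a.2 = a.1 + 1).card

/-- The number of pairs of mutually crossing 2-arcs of `D` (`C₂`-elements). -/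
def twoArcCrossPairs (D : Diagram n) : ℕ :=
  ((D.arcs ×ˢ D.arcs).filter fun p =>
    p.1.2 = p.1.1 + 2 ∧ p.2.2 = p.2.1 + 2 ∧ p.1.1 < p.2.1 ∧ Crosses p.1 p.2).card

/-- The number of `C₃`-elements of `D`: pairs `(α,β)` where `α` is the unique 2-arc
crossing `β` and `β` has length at least 3. -/
def c3count (D : Diagram n) : ℕ :=
  (D.arcs.filter fun b => 3 ≤ b.2 - b.1 ∧
    ∃! a : ℕ × ℕ, a ∈ D.arcs ∧ a.2 = a.1 + 2 ∧ Crosses a b).card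

/-- The number of `C₄`-elements of `D`: triples `(α₁,β,α₂)` where `α₁ ≠ α₂` are
2-arcs crossing `β`. -/
def c4count (D : Diagram n) : ℕ :=
  (D.arcs.filter fun b => ∃ a₁ ∈ D.arcs, ∃ a₂ ∈ D.arcs, a₁ ≠ a₂ ∧
    a₁.2 = a₁.1 + 2 ∧ a₂.2 = a₂.1 + 2 ∧ Crosses a₁ b ∧ Crosses a₂ b).card

/-- A `V_k`-shape: a `k`-noncrossing perfect matching all of whose stacks have
size exactly 1. -/
def IsShape (k : ℕ) (D : Diagram n) : Prop :=
  D.Noncrossing k ∧ D.Perfect ∧ ∀ i j σ : ℕ, D.IsStack i j σ → σ = 1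

/-- The dependency graph of `D`: one vertex per arc, two vertices adjacent iff the
corresponding arcs cross. -/
def depGraph (D : Diagram n) : SimpleGraph {a : ℕ × ℕ // a ∈ D.arcs} :=
  SimpleGraph.fromRel fun a b => Crosses a.1 b.1

/-- A skeleton diagram: every arc crosses some other arc and the dependency
graph is connected. -/
def IsSkeleton (D : Diagram n) : Prop :=
  (∀ a ∈ D.arcs, ∃ b ∈ D.arcs, Crosses a b) ∧ D.depGraph.Connected

/-- `D` is irreducible: no vertex `ℓ` splits the arc set into two nonempty parts
`{(i,j) : j < ℓ}` and `{(i,j) : i ≥ ℓ}` covering all arcs. -/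
def Irreducible (D : Diagram n) : Prop :=
  ¬ ∃ ℓ : ℕ, (∃ a ∈ D.arcs, a.2 < ℓ) ∧ (∃ a ∈ D.arcs, ℓ ≤ a.1) ∧
      ∀ a ∈ D.arcs, a.2 < ℓ ∨ ℓ ≤ a.1

/-- A canonical 3-noncrossing skeleton diagram: a 3-noncrossing skeleton diagram
in which every stack has size at least 3 and every arc has length at least 4. -/
def CanonicalSkeleton (D : Diagram n) : Prop :=
  D.Noncrossing 3 ∧ D.IsSkeleton ∧ MinStack 3 D ∧ MinArcLength 4 D

end Diagram

/-- `Qcount k n` : the number of modular `k`-noncrossing diagrams on `n` vertices. -/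
def Qcount (k n : ℕ) : ℕ := Nat.card {D : Diagram n // D.Modular k}

/-- `fMatch k n = f_k(2n,0)` : the number of `k`-noncrossing perfect matchings
on `2n` vertices. -/
def fMatch (k n : ℕ) : ℕ :=
  Nat.card {D : Diagram (2 * n) // D.Noncrossing k ∧ D.Perfect}

/-- `F_k(z) = Σ_{n ≥ 0} f_k(2n,0) zⁿ`. -/
def Fgf (k : ℕ) : PowerSeries ℚ := PowerSeries.mk fun n => (fMatch k n : ℚ)

/-- `icount2 k s m = i_k(s,m)` : the number of `V_k`-shapes with `s` arcs and
`m` 1-arcs. -/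
def icount2 (k s m : ℕ) : ℕ :=
  Nat.card {D : Diagram (2 * s) // D.IsShape k ∧ D.oneArcs = m}

/-- `icount3 k s u₁ u₂ = i_k(s,u₁,u₂)` : the number of `V_k`-shapes with `s` arcs,
`u₁` 1-arcs and `u₂` pairs of mutually crossing 2-arcs. -/
def icount3 (k s u₁ u₂ : ℕ) : ℕ :=
  Nat.card {D : Diagram (2 * s) // D.IsShape k ∧ D.oneArcs = u₁ ∧
    D.twoArcCrossPairs = u₂}

/-- `icount5 k s u₁ u₂ u₃ u₄ = i_k(s,u₁,u₂,u₃,u₄)` : the number of `V_k`-shapes with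
`s` arcs and `uᵢ` `Cᵢ`-elements for `i = 1,2,3,4`. -/
def icount5 (k s u₁ u₂ u₃ u₄ : ℕ) : ℕ :=
  Nat.card {D : Diagram (2 * s) // D.IsShape k ∧ D.oneArcs = u₁ ∧
    D.twoArcCrossPairs = u₂ ∧ D.c3count = u₃ ∧ D.c4count = u₄}

/-- `S(h)` : the number of 3-noncrossing skeleton perfect matchings with `h` arcs,
with the convention `S(0) = S(1) = 1`. -/
def Scount (h : ℕ) : ℕ :=
  if h ≤ 1 then 1
  else Nat.card {D : Diagram (2 * h) // D.Noncrossing 3 ∧ D.Perfect ∧ D.IsSkeleton}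

/-- `S(y) = Σ_{h ≥ 0} S(h) y^h`. -/
def Sgf : PowerSeries ℚ := PowerSeries.mk fun h => (Scount h : ℚ)

/-- `Irr(h)` : the number of irreducible 3-noncrossing perfect matchings with `h` arcs. -/
def IrrCount (h : ℕ) : ℕ :=
  Nat.card {D : Diagram (2 * h) // D.Noncrossing 3 ∧ D.Perfect ∧ D.Irreducible}

/-- `S3^[4](n)` : the number of canonical 3-noncrossing skeleton diagrams on `n`
vertices. -/
def S34count (n : ℕ) : ℕ := Nat.card {D : Diagram n // D.CanonicalSkeleton}

/-- `A(n,h)` : the number of canonical 3-noncrossing skeleton diagrams on `n`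
vertices having exactly `h` arcs. -/
def Acount (n h : ℕ) : ℕ :=
  Nat.card {D : Diagram n // D.CanonicalSkeleton ∧ D.arcs.card = h}

/-- Substitution `f(g)` of a power series `g` with zero constant term into a
power series `f`, defined coefficientwise by (finite) sums. -/
def substPS (g f : PowerSeries ℚ) : PowerSeries ℚ :=
  PowerSeries.mk fun n => ∑ m ∈ Finset.range (n + 1),
    (PowerSeries.coeff m f) * (PowerSeries.coeff n (g ^ m))

/-- Substitution `f(g)` of a multivariate power series `g` with zero constant term
into a univariate power series `f`, defined coefficientwise by (finite) sums. -/
def substMv {σ : Type*} (g : MvPowerSeries σ ℚ) (f : PowerSeries ℚ) :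
    MvPowerSeries σ ℚ :=
  fun d => ∑ m ∈ Finset.range ((∑ i ∈ d.support, d i) + 1),
    (PowerSeries.coeff m f) * (MvPowerSeries.coeff d (g ^ m))

end

/-!
An irreducible 3-noncrossing matching is cut along its root block: the arcs joined by a chain
of crossings to the arc at vertex `1`. Irreducibility forces the root block to contain the arc at
the last vertex, and an arc outside the root block encloses none of its vertices (a chain of
crossings starting at vertex `1` would have to enter it), so every other arc lies in one of the
`2h - 1` gaps between consecutive vertices of the root block. Relabelled, the root block is a
crossing-connected 3-noncrossing matching with `h` arcs (a skeleton, or a single arc when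
`h = 1`) and the gaps carry arbitrary 3-noncrossing matchings of total size `n - h`; conversely,
inserting matchings into the gaps of such a core always yields an irreducible matching. The
fillings of the `2h - 1` gaps are counted by `[z^(n-h)] F₃(z)^(2h-1)`.
-/

noncomputable section

namespace Diagram

open Finset Relation

section Basic

variable {n : ℕ}

theorem ext_arcs {D E : Diagram n} (h : D.arcs = E.arcs) : D = E := by
  cases D; cases E; simp_all

instance : Finite (Diagram n) :=
  Finite.of_injective (fun D : Diagram n => (⟨D.arcs, mem_powerset.mpr fun a ha => by
      have := D.valid a ha
      simp only [mem_product, mem_Icc]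
      omega⟩ : (Icc 1 n ×ˢ Icc 1 n).powerset))
    fun _ _ h => ext_arcs (congrArg Subtype.val h)

theorem eq_of_mem_of_mem {D : Diagram n} {a b : ℕ × ℕ} {v : ℕ} (ha : a ∈ D.arcs)
    (hb : b ∈ D.arcs) (hva : v = a.1 ∨ v = a.2) (hvb : v = b.1 ∨ v = b.2) : a = b := by
  by_contra hne
  have := D.disj a ha b hb hne
  omega

theorem eq_of_incident_map {D : Diagram n} {φ : ℕ → ℕ} (hφ : Function.Injective φ)
    {a b : ℕ × ℕ} {v : ℕ} (ha : a ∈ D.arcs) (hb : b ∈ D.arcs) (hva : v = φ a.1 ∨ v = φ a.2)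
    (hvb : v = φ b.1 ∨ v = φ b.2) : a = b := by
  rcases hva with rfl | rfl
  · exact D.eq_of_mem_of_mem ha hb (Or.inl rfl) (by simpa only [hφ.eq_iff] using hvb)
  · exact D.eq_of_mem_of_mem ha hb (Or.inr rfl) (by simpa only [hφ.eq_iff] using hvb)

theorem disj_of_eq_of_incident {A : Finset (ℕ × ℕ)}
    (h : ∀ a ∈ A, ∀ b ∈ A, ∀ v, (v = a.1 ∨ v = a.2) → (v = b.1 ∨ v = b.2) → a = b) :
    ∀ a ∈ A, ∀ b ∈ A, a ≠ b → a.1 ≠ b.1 ∧ a.1 ≠ b.2 ∧ a.2 ≠ b.1 ∧ a.2 ≠ b.2 := by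
  intro a ha b hb hne
  exact ⟨fun e => hne (h a ha b hb a.1 (.inl rfl) (.inl e)),
    fun e => hne (h a ha b hb a.1 (.inl rfl) (.inr e)),
    fun e => hne (h a ha b hb a.2 (.inr rfl) (.inl e)),
    fun e => hne (h a ha b hb a.2 (.inr rfl) (.inr e))⟩

def cast {n' : ℕ} (e : n = n') (D : Diagram n) : Diagram n' :=
  ⟨D.arcs, e ▸ D.valid, D.disj⟩

theorem perfect_cast_iff {n' : ℕ} (e : n = n') (D : Diagram n) :
    (D.cast e).Perfect ↔ D.Perfect := by
  subst e; rfl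

end Basic

def endpoints (A : Finset (ℕ × ℕ)) : Finset ℕ := A.biUnion fun a => {a.1, a.2}

theorem mem_endpoints {A : Finset (ℕ × ℕ)} {x : ℕ} :
    x ∈ endpoints A ↔ ∃ a ∈ A, x = a.1 ∨ x = a.2 := by
  simp [endpoints]

theorem endpoints_image (φ : ℕ → ℕ) (A : Finset (ℕ × ℕ)) :
    endpoints (A.image (Prod.map φ φ)) = (endpoints A).image φ := by
  ext x
  simp only [mem_endpoints, mem_image]
  constructor
  · rintro ⟨_, ⟨a, ha, rfl⟩, rfl | rfl⟩
    exacts [⟨a.1, ⟨a, ha, Or.inl rfl⟩, rfl⟩, ⟨a.2, ⟨a, ha, Or.inr rfl⟩, rfl⟩]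
  · rintro ⟨x, ⟨a, ha, rfl | rfl⟩, rfl⟩
    exacts [⟨_, ⟨a, ha, rfl⟩, Or.inl rfl⟩, ⟨_, ⟨a, ha, rfl⟩, Or.inr rfl⟩]

section Endpoints

variable {n : ℕ} (D : Diagram n)

theorem card_endpoints {A : Finset (ℕ × ℕ)} (hA : A ⊆ D.arcs) :
    (endpoints A).card = 2 * A.card := by
  rw [endpoints, card_biUnion, sum_congr rfl fun a ha => card_pair (D.valid a (hA ha)).2.1.ne,
    sum_const, smul_eq_mul, mul_comm]
  intro a ha b hb hne
  have := D.disj a (hA ha) b (hA hb) hne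
  simp only [disjoint_left, mem_insert, mem_singleton]
  omega

variable {D}

theorem Perfect.endpoints_eq (hD : D.Perfect) : endpoints D.arcs = Icc 1 n := by
  ext x
  rw [mem_endpoints, mem_Icc]
  constructor
  · rintro ⟨a, ha, hx⟩
    have := D.valid a ha
    omega
  · exact fun hx => hD x hx.1 hx.2

theorem Perfect.eq_two_mul_card (hD : D.Perfect) : n = 2 * D.arcs.card := by
  simpa [hD.endpoints_eq] using D.card_endpoints (subset_refl _)

end Endpoints

section Crossing

theorem crosses_comm {a b : ℕ × ℕ} : Crosses a b ↔ Crosses b a := by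
  unfold Crosses; tauto

theorem not_crosses_self (a : ℕ × ℕ) : ¬ Crosses a a := by
  unfold Crosses; omega

theorem crosses_map_iff {φ : ℕ → ℕ} (hφ : StrictMono φ) {a b : ℕ × ℕ} :
    Crosses (Prod.map φ φ a) (Prod.map φ φ b) ↔ Crosses a b := by
  simp only [Crosses, Prod.map_fst, Prod.map_snd, hφ.lt_iff_lt]

theorem not_crosses_of_mem_Ioo {P Q : ℕ} {a c : ℕ × ℕ} (hc : c.1 ∈ Set.Ioo P Q ∧ c.2 ∈ Set.Ioo P Q)
    (ha : a.1 ∉ Set.Ioo P Q ∧ a.2 ∉ Set.Ioo P Q) : ¬ Crosses a c := by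
  simp only [Set.mem_Ioo] at hc ha
  unfold Crosses
  omega

def IsCrossing {k : ℕ} (a : Fin k → ℕ × ℕ) : Prop :=
  (∀ s t : Fin k, s < t → (a s).1 < (a t).1) ∧
    (∀ s t : Fin k, s < t → (a s).2 < (a t).2) ∧ ∀ s t : Fin k, (a s).1 < (a t).2

theorem hasCrossing_iff {n k : ℕ} {D : Diagram n} :
    D.HasCrossing k ↔ ∃ a : Fin k → ℕ × ℕ, (∀ t, a t ∈ D.arcs) ∧ IsCrossing a :=
  Iff.rfl

theorem isCrossing_map_iff {k : ℕ} {φ : ℕ → ℕ} (hφ : StrictMono φ) {a : Fin k → ℕ × ℕ} :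
    IsCrossing (Prod.map φ φ ∘ a) ↔ IsCrossing a := by
  simp only [IsCrossing, Function.comp_apply, Prod.map_fst, Prod.map_snd, hφ.lt_iff_lt]

theorem IsCrossing.crosses {k : ℕ} {a : Fin k → ℕ × ℕ} (ha : IsCrossing a) {s t : Fin k}
    (hst : s ≠ t) : Crosses (a s) (a t) := by
  rcases lt_or_gt_of_ne hst with h | h
  · exact Or.inl ⟨ha.1 s t h, ha.2.2 t s, ha.2.1 s t h⟩
  · exact Or.inr ⟨ha.1 t s h, ha.2.2 s t, ha.2.1 t s h⟩

theorem HasCrossing.map {n n' k : ℕ} {D : Diagram n} {E : Diagram n'} {φ : ℕ → ℕ}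
    (hφ : StrictMono φ) (hDE : ∀ a ∈ D.arcs, Prod.map φ φ a ∈ E.arcs)
    (hD : D.HasCrossing k) : E.HasCrossing k := by
  obtain ⟨a, ha, hcr⟩ := hD
  exact ⟨Prod.map φ φ ∘ a, fun t => hDE _ (ha t), (isCrossing_map_iff hφ).mpr hcr⟩

theorem IsCrossing.hasCrossing_of_map {n k : ℕ} {D : Diagram n} {φ : ℕ → ℕ} (hφ : StrictMono φ)
    {a : Fin k → ℕ × ℕ} (ha : IsCrossing a) (hmem : ∀ t, ∃ c ∈ D.arcs, Prod.map φ φ c = a t) :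
    D.HasCrossing k := by
  choose c hc hca using hmem
  refine ⟨c, hc, (isCrossing_map_iff hφ).mp ?_⟩
  rwa [show Prod.map φ φ ∘ c = a from funext hca]

end Crossing

section Connected

def CrossIn (A : Finset (ℕ × ℕ)) (a b : ℕ × ℕ) : Prop := a ∈ A ∧ b ∈ A ∧ Crosses a b

instance (A : Finset (ℕ × ℕ)) : Std.Symm (CrossIn A) :=
  ⟨fun _ _ h => ⟨h.2.1, h.1, crosses_comm.mp h.2.2⟩⟩

theorem mem_of_reflTransGen_crossIn {A : Finset (ℕ × ℕ)} {a b : ℕ × ℕ} (ha : a ∈ A)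
    (hab : ReflTransGen (CrossIn A) a b) : b ∈ A := by
  cases hab.cases_tail with
  | inl h => exact h ▸ ha
  | inr h => exact h.choose_spec.2.2.1

def CrossConnected (A : Finset (ℕ × ℕ)) : Prop :=
  ∀ a ∈ A, ∀ b ∈ A, ReflTransGen (CrossIn A) a b

theorem crossConnected_image_iff {φ : ℕ → ℕ} (hφ : StrictMono φ) {A : Finset (ℕ × ℕ)} :
    CrossConnected (A.image (Prod.map φ φ)) ↔ CrossConnected A := by
  have hinj : Function.Injective (Prod.map φ φ) := hφ.injective.prodMap hφ.injective
  constructor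
  · intro hcon a ha b hb
    have key : ∀ z, ReflTransGen (CrossIn (A.image (Prod.map φ φ))) (Prod.map φ φ a) z →
        ∀ b, Prod.map φ φ b = z → ReflTransGen (CrossIn A) a b := by
      intro z hz
      induction hz with
      | refl => intro b hb; rw [hinj hb]
      | @tail y z _ hyz ih =>
        obtain ⟨c, hc, rfl⟩ := mem_image.mp hyz.1
        obtain ⟨d, hd, rfl⟩ := mem_image.mp hyz.2.1
        intro b hb
        rw [hinj hb]
        exact (ih c rfl).tail ⟨hc, hd, (crosses_map_iff hφ).mp hyz.2.2⟩
    exact key _ (hcon _ (mem_image_of_mem _ ha) _ (mem_image_of_mem _ hb)) b rfl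
  · intro hcon x hx y hy
    obtain ⟨a, ha, rfl⟩ := mem_image.mp hx
    obtain ⟨b, hb, rfl⟩ := mem_image.mp hy
    exact (hcon a ha b hb).lift _ fun c d hcd =>
      ⟨mem_image_of_mem _ hcd.1, mem_image_of_mem _ hcd.2.1, (crosses_map_iff hφ).mpr hcd.2.2⟩

theorem isSkeleton_iff {n : ℕ} {D : Diagram n} (hcard : 2 ≤ D.arcs.card) :
    D.IsSkeleton ↔ CrossConnected D.arcs := by
  constructor
  · rintro ⟨-, hconn⟩ a ha b hb
    have key : ∀ u v, D.depGraph.Walk u v → ReflTransGen (CrossIn D.arcs) u.1 v.1 := by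
      intro u v p
      induction p with
      | nil => rfl
      | @cons u v _ huv _ ih =>
        rw [depGraph, SimpleGraph.fromRel_adj] at huv
        exact ReflTransGen.head ⟨u.2, v.2, huv.2.elim id crosses_comm.mp⟩ ih
    exact key _ _ (hconn.preconnected ⟨a, ha⟩ ⟨b, hb⟩).some
  · intro hcon
    refine ⟨fun a ha => ?_, ?_⟩
    · obtain ⟨b, hb, hba⟩ := exists_mem_ne hcard a
      obtain rfl | ⟨c, hc, -⟩ := (hcon a ha b hb).cases_head
      · exact absurd rfl hba
      · exact ⟨c, hc.2.1, hc.2.2⟩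
    · obtain ⟨a, ha⟩ := card_pos.mp (by omega : 0 < D.arcs.card)
      refine (SimpleGraph.connected_iff _).mpr ⟨fun x y => ?_, ⟨⟨a, ha⟩⟩⟩
      have key : ∀ y : ℕ × ℕ, ReflTransGen (CrossIn D.arcs) x.1 y →
          ∀ hy : y ∈ D.arcs, D.depGraph.Reachable x ⟨y, hy⟩ := by
        intro y hxy
        induction hxy with
        | refl => intro _; rfl
        | tail _ hrel ih =>
          refine fun hy => (ih hrel.1).trans (SimpleGraph.Adj.reachable ?_)
          rw [depGraph, SimpleGraph.fromRel_adj]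
          refine ⟨fun h => ?_, Or.inl hrel.2.2⟩
          have hcr := hrel.2.2
          rw [Subtype.mk.injEq] at h
          exact not_crosses_self _ (h ▸ hcr)
      exact key y.1 (hcon _ x.2 _ y.2) y.2

end Connected

section RootBlock

def rootBlock (A : Finset (ℕ × ℕ)) : Finset (ℕ × ℕ) :=
  A.filter fun b => ∃ a ∈ A, a.1 = 1 ∧ ReflTransGen (CrossIn A) a b

theorem mem_rootBlock {A : Finset (ℕ × ℕ)} {b : ℕ × ℕ} :
    b ∈ rootBlock A ↔ ∃ a ∈ A, a.1 = 1 ∧ ReflTransGen (CrossIn A) a b :=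
  mem_filter.trans ⟨fun h => h.2, fun ⟨a, ha, ha1, hab⟩ =>
    ⟨mem_of_reflTransGen_crossIn ha hab, a, ha, ha1, hab⟩⟩

theorem rootBlock_subset (A : Finset (ℕ × ℕ)) : rootBlock A ⊆ A := filter_subset _ _

variable {N : ℕ} (D : Diagram N)

theorem crossConnected_rootBlock : CrossConnected (rootBlock D.arcs) := by
  have lift : ∀ r ∈ D.arcs, r.1 = 1 → ∀ x, ReflTransGen (CrossIn D.arcs) r x →
      ReflTransGen (CrossIn (rootBlock D.arcs)) r x := by
    intro r hr hr1 x hrx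
    induction hrx with
    | refl => rfl
    | @tail y z hry hyz ih =>
      exact ih.tail ⟨mem_rootBlock.mpr ⟨r, hr, hr1, hry⟩,
        mem_rootBlock.mpr ⟨r, hr, hr1, hry.tail hyz⟩, hyz.2.2⟩
  intro x hx y hy
  obtain ⟨r, hr, hr1, hrx⟩ := mem_rootBlock.mp hx
  obtain ⟨r', hr', hr1', hry⟩ := mem_rootBlock.mp hy
  obtain rfl := D.eq_of_mem_of_mem hr hr' (Or.inl hr1.symm) (Or.inl hr1'.symm)
  exact (Std.Symm.symm _ _ (lift r hr hr1 x hrx)).trans (lift r hr hr1 y hry)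

variable {D}

theorem notMem_Icc_of_notMem_rootBlock {b : ℕ × ℕ} (hb : b ∈ D.arcs)
    (hbC : b ∉ rootBlock D.arcs) {x : ℕ} (hx : x ∈ endpoints (rootBlock D.arcs)) :
    x ∉ Set.Icc b.1 b.2 := by
  obtain ⟨c, hc, hxc⟩ := mem_endpoints.mp hx
  obtain ⟨r, hr, hr1, hrc⟩ := mem_rootBlock.mp hc
  have hvb := D.valid b hb
  have hsep : ∀ d, ReflTransGen (CrossIn D.arcs) r d → (1 ≤ d.1 ∧ d.1 < d.2) ∧
      (d.1 ≠ b.1 ∧ d.1 ≠ b.2 ∧ d.2 ≠ b.1 ∧ d.2 ≠ b.2) ∧ ¬ Crosses d b := by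
    intro d hrd
    have hd := mem_of_reflTransGen_crossIn hr hrd
    have hdb : d ≠ b := fun h => hbC (h ▸ mem_rootBlock.mpr ⟨r, hr, hr1, hrd⟩)
    refine ⟨⟨(D.valid d hd).1, (D.valid d hd).2.1⟩, D.disj d hd b hb hdb, fun h => ?_⟩
    exact hbC (mem_rootBlock.mpr ⟨r, hr, hr1, hrd.tail ⟨hd, hb, h⟩⟩)
  -- An arc nested inside `b` is only crossed by arcs with an endpoint inside `b`, so the chain
  -- of crossings from the root arc, which starts to the left of `b`, never enters `[b.1, b.2]`.
  have hfar : ∀ d, ReflTransGen (CrossIn D.arcs) r d →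
      d.1 ∉ Set.Icc b.1 b.2 ∧ d.2 ∉ Set.Icc b.1 b.2 := by
    intro d hrd
    simp only [Set.mem_Icc]
    induction hrd with
    | refl =>
      obtain ⟨-, hdisj, hnc⟩ := hsep r .refl
      unfold Crosses at hnc
      omega
    | @tail c d hrc hcd ih =>
      obtain ⟨hvd, hdisj, hnc⟩ := hsep d (hrc.tail hcd)
      have hcr := hcd.2.2
      unfold Crosses at hnc hcr
      omega
  rcases hxc with rfl | rfl
  exacts [(hfar c hrc).1, (hfar c hrc).2]

theorem Irreducible.mem_rootBlock (hD : D.Irreducible) {r b : ℕ × ℕ} (hr : r ∈ D.arcs)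
    (hr1 : r.1 = 1) (hb : b ∈ D.arcs) (hbN : b.2 = N) : b ∈ rootBlock D.arcs := by
  -- otherwise cutting just after the last vertex of the root block splits `D`
  by_contra hbC
  set V := endpoints (rootBlock D.arcs)
  have hrC : r ∈ rootBlock D.arcs := Diagram.mem_rootBlock.mpr ⟨r, hr, hr1, .refl⟩
  have hV : V.Nonempty := ⟨r.2, mem_endpoints.mpr ⟨r, hrC, Or.inr rfl⟩⟩
  have hvV := V.max'_mem hV
  obtain ⟨c, hc, hcv⟩ := mem_endpoints.mp hvV
  have hvc := D.valid c (rootBlock_subset _ hc)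
  refine hD ⟨V.max' hV + 1, ⟨r, hr, ?_⟩, ⟨b, hb, ?_⟩, fun a ha => ?_⟩
  · have := V.le_max' _ (mem_endpoints.mpr ⟨r, hrC, Or.inr rfl⟩)
    omega
  · have hout := notMem_Icc_of_notMem_rootBlock hb hbC hvV
    have := D.valid b hb
    rw [Set.mem_Icc] at hout
    omega
  · by_cases haC : a ∈ rootBlock D.arcs
    · have := V.le_max' a.2 (mem_endpoints.mpr ⟨a, haC, Or.inr rfl⟩)
      omega
    · have hout := notMem_Icc_of_notMem_rootBlock ha haC hvV
      have := D.valid a ha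
      rw [Set.mem_Icc] at hout
      omega

theorem irreducible_of_mem_rootBlock {b : ℕ × ℕ} (hb : b ∈ rootBlock D.arcs) (hbN : b.2 = N) :
    D.Irreducible := by
  rintro ⟨ℓ, ⟨u, hu, huℓ⟩, ⟨v, hv, hvℓ⟩, hsplit⟩
  obtain ⟨r, hr, hr1, hrb⟩ := mem_rootBlock.mp hb
  have hleft : ∀ d, ReflTransGen (CrossIn D.arcs) r d → d.2 < ℓ := by
    intro d hrd
    induction hrd with
    | refl =>
      have := D.valid u hu
      exact (hsplit r hr).resolve_right (by omega)
    | @tail c d _ hcd ih =>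
      have hcr := hcd.2.2
      unfold Crosses at hcr
      exact (hsplit d hcd.2.1).resolve_right (by omega)
  have := hleft b hrb
  have := D.valid v hv
  omega

end RootBlock

section Positions

variable {m : ℕ} (w : Fin (m - 1) → ℕ)

/-- Position of core vertex `v` after a gap of `w i` new vertices has been opened between the
core vertices `i + 1` and `i + 2`, for every `i`. -/
def corePos (v : ℕ) : ℕ := v + ∑ i : Fin (m - 1), if (i : ℕ) + 1 < v then w i else 0

def gapPos (i : Fin (m - 1)) (o : ℕ) : ℕ := corePos w (i + 1) + o

def gap (i : Fin (m - 1)) : Set ℕ := Set.Ioo (corePos w (i + 1)) (corePos w (i + 2))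

@[simp]
theorem corePos_zero : corePos w 0 = 0 := by simp [corePos]

@[simp]
theorem corePos_one : corePos w 1 = 1 := by simp [corePos]

theorem corePos_succ (v : ℕ) : corePos w (v + 1) =
    corePos w v + 1 + ∑ i : Fin (m - 1), if (i : ℕ) + 1 = v then w i else 0 := by
  have split : ∀ i : Fin (m - 1), (if (i : ℕ) + 1 < v + 1 then w i else 0) =
      (if (i : ℕ) + 1 < v then w i else 0) + if (i : ℕ) + 1 = v then w i else 0 := by
    intro i
    split_ifs <;> omega
  simp only [corePos, sum_congr rfl fun i _ => split i, sum_add_distrib]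
  ring

theorem le_corePos (v : ℕ) : v ≤ corePos w v := Nat.le_add_right _ _

theorem corePos_strictMono : StrictMono (corePos w) :=
  strictMono_nat_of_lt_succ fun v => by rw [corePos_succ]; omega

theorem corePos_gap (i : Fin (m - 1)) :
    corePos w (i + 2) = corePos w (i + 1) + 1 + w i := by
  rw [corePos_succ]
  simp [Fin.val_inj]

theorem corePos_last (hm : 1 ≤ m) : corePos w m = m + ∑ i, w i := by
  simp only [corePos]
  exact congrArg _ (sum_congr rfl fun i _ => if_pos (by omega))

theorem gapPos_strictMono (i : Fin (m - 1)) : StrictMono (gapPos w i) :=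
  fun _ _ h => Nat.add_lt_add_left h _

theorem gapPos_mem_gap {i : Fin (m - 1)} {o : ℕ} (ho : o ∈ Icc 1 (w i)) :
    gapPos w i o ∈ gap w i := by
  rw [mem_Icc] at ho
  have := corePos_gap w i
  simp only [gap, gapPos, Set.mem_Ioo]
  omega

theorem corePos_not_mem_gap (v : ℕ) (i : Fin (m - 1)) : corePos w v ∉ gap w i := by
  simp only [gap, Set.mem_Ioo, (corePos_strictMono w).lt_iff_lt]
  omega

theorem gapPos_not_mem_gap {i j : Fin (m - 1)} (hij : j ≠ i) {o : ℕ} (ho : o ∈ Icc 1 (w j)) :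
    gapPos w j o ∉ gap w i := by
  have hj := gapPos_mem_gap w ho
  simp only [gap, Set.mem_Ioo] at hj ⊢
  rcases lt_or_gt_of_ne (Fin.val_ne_of_ne hij) with h | h
  · have := (corePos_strictMono w).monotone (by omega : (j : ℕ) + 2 ≤ i + 1)
    omega
  · have := (corePos_strictMono w).monotone (by omega : (i : ℕ) + 2 ≤ j + 1)
    omega

theorem gapPos_sub {i : Fin (m - 1)} {x : ℕ} (hx : x ∈ gap w i) :
    gapPos w i (x - corePos w (i + 1)) = x ∧ x - corePos w (i + 1) ∈ Icc 1 (w i) := by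
  have := corePos_gap w i
  simp only [gap, Set.mem_Ioo] at hx
  simp only [gapPos, mem_Icc]
  omega

theorem eq_of_mem_gap {i j : Fin (m - 1)} {x : ℕ} (hi : x ∈ gap w i) (hj : x ∈ gap w j) :
    i = j := by
  by_contra hij
  obtain ⟨hx, ho⟩ := gapPos_sub w hi
  exact gapPos_not_mem_gap w hij ho (by rw [hx]; exact hj)

theorem not_crosses_of_mem_gap {i : Fin (m - 1)} {a c : ℕ × ℕ}
    (hc : c.1 ∈ gap w i ∧ c.2 ∈ gap w i) (ha : a.1 ∉ gap w i ∧ a.2 ∉ gap w i) : ¬ Crosses a c :=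
  not_crosses_of_mem_Ioo hc ha

theorem eq_corePos_or_mem_gap {x : ℕ} (hx1 : 1 ≤ x) (hx : x ≤ corePos w m) :
    (∃ v ∈ Icc 1 m, x = corePos w v) ∨ ∃ i, x ∈ gap w i := by
  classical
  have hex : ∃ v, x ≤ corePos w v := ⟨m, hx⟩
  set v := Nat.find hex
  have hv : x ≤ corePos w v := Nat.find_spec hex
  have hvm : v ≤ m := Nat.find_min' hex hx
  have hv1 : 1 ≤ v := by
    by_contra h
    simp only [show v = 0 by omega, corePos_zero] at hv
    omega
  rcases hv.eq_or_lt with heq | hlt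
  · exact Or.inl ⟨v, mem_Icc.mpr ⟨hv1, hvm⟩, heq⟩
  · have hprev : corePos w (v - 1) < x := not_le.mp (Nat.find_min hex (by omega))
    have hv2 : 2 ≤ v := by
      by_contra h
      simp only [show v - 1 = 0 by omega, corePos_zero] at hprev
      simp only [show v = 1 by omega, corePos_one] at hlt
      omega
    refine Or.inr ⟨⟨v - 2, by omega⟩, ?_⟩
    simp only [gap, Set.mem_Ioo, show v - 2 + 1 = v - 1 by omega, show v - 2 + 2 = v by omega]
    exact ⟨hprev, hlt⟩

end Positions

section Inflate

variable {m : ℕ} (w : Fin (m - 1) → ℕ)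

def inflateArcs (A : Finset (ℕ × ℕ)) (F : Fin (m - 1) → Finset (ℕ × ℕ)) : Finset (ℕ × ℕ) :=
  A.image (Prod.map (corePos w) (corePos w)) ∪
    univ.biUnion fun i => (F i).image (Prod.map (gapPos w i) (gapPos w i))

variable {w} in
theorem mem_inflateArcs {A : Finset (ℕ × ℕ)} {F : Fin (m - 1) → Finset (ℕ × ℕ)} {b : ℕ × ℕ} :
    b ∈ inflateArcs w A F ↔ (∃ a ∈ A, Prod.map (corePos w) (corePos w) a = b) ∨
      ∃ i, ∃ a ∈ F i, Prod.map (gapPos w i) (gapPos w i) a = b := by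
  simp [inflateArcs]

variable (S : Diagram m) (f : ∀ i, Diagram (w i))

variable {w f} in
theorem gapPos_mem_gap_of_mem {i : Fin (m - 1)} {a : ℕ × ℕ} (ha : a ∈ (f i).arcs) :
    gapPos w i a.1 ∈ gap w i ∧ gapPos w i a.2 ∈ gap w i := by
  have := (f i).valid a ha
  exact ⟨gapPos_mem_gap w (mem_Icc.mpr (by omega)), gapPos_mem_gap w (mem_Icc.mpr (by omega))⟩

theorem inflateArcs_valid : ∀ b ∈ inflateArcs w S.arcs (fun i => (f i).arcs),
    1 ≤ b.1 ∧ b.1 < b.2 ∧ b.2 ≤ corePos w m := by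
  intro b hb
  rcases mem_inflateArcs.mp hb with ⟨a, ha, rfl⟩ | ⟨i, a, ha, rfl⟩
  · obtain ⟨h1, h2, h3⟩ := S.valid a ha
    exact ⟨h1.trans (le_corePos w _), corePos_strictMono w h2, (corePos_strictMono w).monotone h3⟩
  · have := (f i).valid a ha
    have := corePos_gap w i
    have := (corePos_strictMono w).monotone (show (i : ℕ) + 2 ≤ m by omega)
    simp only [Prod.map_fst, Prod.map_snd, gapPos]
    omega

theorem inflateArcs_disj : ∀ a ∈ inflateArcs w S.arcs (fun i => (f i).arcs),
    ∀ b ∈ inflateArcs w S.arcs (fun i => (f i).arcs), a ≠ b →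
      a.1 ≠ b.1 ∧ a.1 ≠ b.2 ∧ a.2 ≠ b.1 ∧ a.2 ≠ b.2 := by
  refine disj_of_eq_of_incident fun a ha b hb v hva hvb => ?_
  have core_gap : ∀ x (j : Fin (m - 1)) (b : ℕ × ℕ), b ∈ (f j).arcs →
      v = corePos w x → (v = gapPos w j b.1 ∨ v = gapPos w j b.2) → False := by
    rintro x j b hb rfl hvb
    have := gapPos_mem_gap_of_mem hb
    rcases hvb with h | h <;> exact corePos_not_mem_gap w x j (h ▸ by tauto)
  rcases mem_inflateArcs.mp ha with ⟨a, ha', rfl⟩ | ⟨i, a, ha', rfl⟩ <;>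
    rcases mem_inflateArcs.mp hb with ⟨b, hb', rfl⟩ | ⟨j, b, hb', rfl⟩
  · rw [eq_of_incident_map (corePos_strictMono w).injective ha' hb' hva hvb]
  · rcases hva with h | h <;> exact (core_gap _ j b hb' h hvb).elim
  · rcases hvb with h | h <;> exact (core_gap _ i a ha' h hva).elim
  · obtain rfl : i = j := by
      have hi := gapPos_mem_gap_of_mem ha'
      have hj := gapPos_mem_gap_of_mem hb'
      simp only [Prod.map_fst, Prod.map_snd] at hva hvb
      exact eq_of_mem_gap w (hva.elim (· ▸ hi.1) (· ▸ hi.2)) (hvb.elim (· ▸ hj.1) (· ▸ hj.2))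
    rw [eq_of_incident_map (gapPos_strictMono w i).injective ha' hb' hva hvb]

def inflate : Diagram (corePos w m) :=
  ⟨inflateArcs w S.arcs fun i => (f i).arcs, inflateArcs_valid w S f, inflateArcs_disj w S f⟩

variable {w S f}

theorem mem_inflate_arcs {b : ℕ × ℕ} : b ∈ (inflate w S f).arcs ↔
    (∃ a ∈ S.arcs, Prod.map (corePos w) (corePos w) a = b) ∨
      ∃ i, ∃ a ∈ (f i).arcs, Prod.map (gapPos w i) (gapPos w i) a = b :=
  mem_inflateArcs

theorem exists_core_of_crosses {a b : ℕ × ℕ} (hb : b ∈ (inflate w S f).arcs)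
    (hab : Crosses (Prod.map (corePos w) (corePos w) a) b) :
    ∃ c ∈ S.arcs, Prod.map (corePos w) (corePos w) c = b := by
  refine mem_inflate_arcs.mp hb |>.resolve_right ?_
  rintro ⟨i, c, hc, rfl⟩
  refine not_crosses_of_mem_gap w (gapPos_mem_gap_of_mem hc) ?_ hab
  exact ⟨corePos_not_mem_gap w _ i, corePos_not_mem_gap w _ i⟩

theorem exists_gap_of_crosses {i : Fin (m - 1)} {a b : ℕ × ℕ} (ha : a ∈ (f i).arcs)
    (hb : b ∈ (inflate w S f).arcs) (hab : Crosses (Prod.map (gapPos w i) (gapPos w i) a) b) :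
    ∃ c ∈ (f i).arcs, Prod.map (gapPos w i) (gapPos w i) c = b := by
  have hgap := gapPos_mem_gap_of_mem ha
  rcases mem_inflate_arcs.mp hb with ⟨c, -, rfl⟩ | ⟨j, c, hc, rfl⟩
  · exact absurd (crosses_comm.mp hab) (not_crosses_of_mem_gap w hgap
      ⟨corePos_not_mem_gap w _ i, corePos_not_mem_gap w _ i⟩)
  · obtain rfl : j = i := by
      by_contra hji
      have hc' := gapPos_mem_gap_of_mem hc
      exact not_crosses_of_mem_gap w hgap
        ⟨fun h => hji (eq_of_mem_gap w hc'.1 h), fun h => hji (eq_of_mem_gap w hc'.2 h)⟩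
        (crosses_comm.mp hab)
    exact ⟨c, hc, rfl⟩

theorem inflate_hasCrossing_iff {k : ℕ} :
    (inflate w S f).HasCrossing k ↔ S.HasCrossing k ∨ ∃ i, (f i).HasCrossing k := by
  rw [hasCrossing_iff]
  constructor
  · rintro ⟨a, ha, hcr⟩
    cases k with
    | zero => exact Or.inl ⟨a, fun t => t.elim0, hcr⟩
    | succ k =>
      rcases mem_inflate_arcs.mp (ha 0) with ⟨a₀, ha₀, he₀⟩ | ⟨i, a₀, ha₀, he₀⟩
      · refine Or.inl (hcr.hasCrossing_of_map (corePos_strictMono w) fun t => ?_)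
        rcases eq_or_ne 0 t with rfl | ht
        exacts [⟨a₀, ha₀, he₀⟩, exists_core_of_crosses (ha t) (he₀ ▸ hcr.crosses ht)]
      · refine Or.inr ⟨i, hcr.hasCrossing_of_map (gapPos_strictMono w i) fun t => ?_⟩
        rcases eq_or_ne 0 t with rfl | ht
        exacts [⟨a₀, ha₀, he₀⟩, exists_gap_of_crosses ha₀ (ha t) (he₀ ▸ hcr.crosses ht)]
  · rintro (h | ⟨i, h⟩)
    · exact h.map (corePos_strictMono w) fun a ha => mem_inflate_arcs.mpr (.inl ⟨a, ha, rfl⟩)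
    · exact h.map (gapPos_strictMono w i) fun a ha => mem_inflate_arcs.mpr (.inr ⟨i, a, ha, rfl⟩)

theorem inflate_noncrossing_iff {k : ℕ} :
    (inflate w S f).Noncrossing k ↔ S.Noncrossing k ∧ ∀ i, (f i).Noncrossing k := by
  simp only [Noncrossing, inflate_hasCrossing_iff, not_or, not_exists]

theorem Perfect.core_of_inflate (hP : (inflate w S f).Perfect) : S.Perfect := by
  intro v hv1 hvm
  obtain ⟨b, hb, hvb⟩ := hP (corePos w v) (hv1.trans (le_corePos w v))
    ((corePos_strictMono w).monotone hvm)
  rcases mem_inflate_arcs.mp hb with ⟨a, ha, rfl⟩ | ⟨j, a, ha, rfl⟩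
  · exact ⟨a, ha, by
      simpa only [Prod.map_fst, Prod.map_snd, (corePos_strictMono w).injective.eq_iff] using hvb⟩
  · have := gapPos_mem_gap_of_mem ha
    rcases hvb with h | h <;> exact absurd (h ▸ (by tauto)) (corePos_not_mem_gap w v j)

theorem Perfect.gap_of_inflate (hP : (inflate w S f).Perfect) (i : Fin (m - 1)) :
    (f i).Perfect := by
  intro o ho1 how
  have ho : o ∈ Icc 1 (w i) := mem_Icc.mpr ⟨ho1, how⟩
  have hx := gapPos_mem_gap w ho
  have := (corePos_strictMono w).monotone (show (i : ℕ) + 2 ≤ m by omega)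
  rw [gap, Set.mem_Ioo] at hx
  obtain ⟨b, hb, hxb⟩ := hP (gapPos w i o) (by omega) (by omega)
  rcases mem_inflate_arcs.mp hb with ⟨a, -, rfl⟩ | ⟨j, a, ha, rfl⟩
  · rcases hxb with h | h <;> exact (corePos_not_mem_gap w _ i (h ▸ gapPos_mem_gap w ho)).elim
  · obtain rfl : i = j := by
      have := gapPos_mem_gap_of_mem ha
      rcases hxb with h | h
      exacts [eq_of_mem_gap w (gapPos_mem_gap w ho) (h ▸ this.1),
        eq_of_mem_gap w (gapPos_mem_gap w ho) (h ▸ this.2)]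
    exact ⟨a, ha, by
      simpa only [Prod.map_fst, Prod.map_snd, (gapPos_strictMono w i).injective.eq_iff] using hxb⟩

theorem inflate_perfect (hS : S.Perfect) (hf : ∀ i, (f i).Perfect) : (inflate w S f).Perfect := by
  intro x hx1 hx
  rcases eq_corePos_or_mem_gap w hx1 hx with ⟨v, hv, rfl⟩ | ⟨i, hi⟩
  · rw [mem_Icc] at hv
    obtain ⟨a, ha, hva⟩ := hS v hv.1 hv.2
    refine ⟨_, mem_inflate_arcs.mpr (.inl ⟨a, ha, rfl⟩), ?_⟩
    rcases hva with rfl | rfl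
    exacts [.inl rfl, .inr rfl]
  · obtain ⟨hx', ho⟩ := gapPos_sub w hi
    rw [mem_Icc] at ho
    obtain ⟨a, ha, hoa⟩ := hf i _ ho.1 ho.2
    refine ⟨_, mem_inflate_arcs.mpr (.inr ⟨i, a, ha, rfl⟩), ?_⟩
    rw [← hx']
    rcases hoa with h | h
    exacts [.inl (congrArg _ h), .inr (congrArg _ h)]

theorem inflate_perfect_iff : (inflate w S f).Perfect ↔ S.Perfect ∧ ∀ i, (f i).Perfect :=
  ⟨fun hP => ⟨hP.core_of_inflate, hP.gap_of_inflate⟩, fun h => inflate_perfect h.1 h.2⟩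

theorem rootBlock_inflate (hm : 1 ≤ m) (hS : S.Perfect) (hcon : CrossConnected S.arcs) :
    rootBlock (inflate w S f).arcs = S.arcs.image (Prod.map (corePos w) (corePos w)) := by
  ext b
  rw [mem_rootBlock, mem_image]
  constructor
  · rintro ⟨r, hr, hr1, hrb⟩
    induction hrb with
    | refl =>
      refine (mem_inflate_arcs.mp hr).resolve_right ?_
      rintro ⟨i, c, hc, rfl⟩
      have hgap := (gapPos_mem_gap_of_mem hc).1
      have := le_corePos w (i + 1)
      rw [gap, Set.mem_Ioo] at hgap
      rw [Prod.map_fst] at hr1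
      omega
    | tail _ hyz ih =>
      obtain ⟨c, -, rfl⟩ := ih
      exact exists_core_of_crosses hyz.2.1 hyz.2.2
  · rintro ⟨a, ha, rfl⟩
    obtain ⟨r, hr, hr1⟩ := hS 1 le_rfl hm
    have hr1 : r.1 = 1 := by
      have := S.valid r hr
      omega
    have hsub : S.arcs.image (Prod.map (corePos w) (corePos w)) ⊆ (inflate w S f).arcs :=
      fun x hx => mem_inflate_arcs.mpr (.inl (mem_image.mp hx))
    refine ⟨_, hsub (mem_image_of_mem _ hr), by simp [hr1], ?_⟩
    have hmono : CrossIn (S.arcs.image (Prod.map (corePos w) (corePos w))) ≤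
        CrossIn (inflate w S f).arcs := fun x y hxy => ⟨hsub hxy.1, hsub hxy.2.1, hxy.2.2⟩
    exact ReflTransGen.mono hmono _ _ <| (crossConnected_image_iff (corePos_strictMono w)).mpr
      hcon _ (mem_image_of_mem _ hr) _ (mem_image_of_mem _ ha)

theorem inflate_irreducible (hm : 1 ≤ m) (hS : S.Perfect) (hcon : CrossConnected S.arcs) :
    (inflate w S f).Irreducible := by
  obtain ⟨b, hb, hmb⟩ := hS m hm le_rfl
  have hb2 : b.2 = m := by
    have := S.valid b hb
    omega
  refine irreducible_of_mem_rootBlock (b := Prod.map (corePos w) (corePos w) b) ?_ (by simp [hb2])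
  rw [rootBlock_inflate hm hS hcon]
  exact mem_image_of_mem _ hb

theorem filter_mem_gap_inflate (i : Fin (m - 1)) :
    (inflate w S f).arcs.filter (fun b => b.1 ∈ gap w i) =
      (f i).arcs.image (Prod.map (gapPos w i) (gapPos w i)) := by
  ext b
  rw [mem_filter, mem_image]
  constructor
  · rintro ⟨hb, hbi⟩
    rcases mem_inflate_arcs.mp hb with ⟨a, -, rfl⟩ | ⟨j, a, ha, rfl⟩
    · exact (corePos_not_mem_gap w _ i hbi).elim
    · obtain rfl := eq_of_mem_gap w (gapPos_mem_gap_of_mem ha).1 hbi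
      exact ⟨a, ha, rfl⟩
  · rintro ⟨a, ha, rfl⟩
    exact ⟨mem_inflate_arcs.mpr (.inr ⟨i, a, ha, rfl⟩), (gapPos_mem_gap_of_mem ha).1⟩

end Inflate

section Comap

variable {N : ℕ}

def comap (E : Diagram N) (n : ℕ) {φ : ℕ → ℕ} (hφ : StrictMono φ) : Diagram n where
  arcs := (Icc 1 n ×ˢ Icc 1 n).filter fun a => a.1 < a.2 ∧ Prod.map φ φ a ∈ E.arcs
  valid a ha := by
    simp only [mem_filter, mem_product, mem_Icc] at ha
    omega
  disj := disj_of_eq_of_incident fun a ha b hb v hva hvb => by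
    simp only [mem_filter] at ha hb
    exact (hφ.injective.prodMap hφ.injective) (E.eq_of_mem_of_mem ha.2.2 hb.2.2
      (hva.imp (congrArg φ) (congrArg φ)) (hvb.imp (congrArg φ) (congrArg φ)))

theorem mem_comap {E : Diagram N} {n : ℕ} {φ : ℕ → ℕ} {hφ : StrictMono φ} {a : ℕ × ℕ} :
    a ∈ (E.comap n hφ).arcs ↔ (1 ≤ a.1 ∧ a.1 < a.2 ∧ a.2 ≤ n) ∧ Prod.map φ φ a ∈ E.arcs := by
  simp only [comap, mem_filter, mem_product, mem_Icc]
  constructor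
  · rintro ⟨h, hlt, hmem⟩
    exact ⟨by omega, hmem⟩
  · rintro ⟨h, hmem⟩
    exact ⟨by omega, h.2.1, hmem⟩

end Comap

theorem exists_image_corePos_eq {V : Finset ℕ} {m : ℕ} (hV : V.card = m) (h1 : 1 ∈ V)
    (hpos : ∀ x ∈ V, 1 ≤ x) : ∃ w : Fin (m - 1) → ℕ, (Icc 1 m).image (corePos w) = V := by
  obtain ⟨e, hmem, hsurj⟩ : ∃ e : Fin m ↪o ℕ, (∀ j, e j ∈ V) ∧ ∀ x ∈ V, ∃ j, e j = x :=
    ⟨V.orderEmbOfFin hV, V.orderEmbOfFin_mem hV, fun x hx => by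
      rwa [← Set.mem_range, range_orderEmbOfFin]⟩
  set w : Fin (m - 1) → ℕ := fun i => e ⟨i + 1, by omega⟩ - e ⟨i, by omega⟩ - 1
  refine ⟨w, ?_⟩
  have he : ∀ v (hv : v < m), corePos w (v + 1) = e ⟨v, hv⟩ := by
    intro v hv
    induction v with
    | zero =>
      obtain ⟨j, hj⟩ := hsurj 1 h1
      have := e.monotone (show (⟨0, hv⟩ : Fin m) ≤ j from Nat.zero_le _)
      have := hpos _ (hmem ⟨0, hv⟩)
      rw [corePos_one]
      omega
    | succ v ih =>
      have hlt := e.strictMono (show (⟨v, by omega⟩ : Fin m) < ⟨v + 1, hv⟩ from Nat.lt_succ_self v)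
      have := corePos_gap w ⟨v, by omega⟩
      simp only at this
      rw [this, ih (by omega)]
      simp only [w]
      omega
  ext x
  simp only [mem_image, mem_Icc]
  constructor
  · rintro ⟨v, hv, rfl⟩
    rw [show v = v - 1 + 1 by omega, he _ (by omega)]
    exact hmem _
  · intro hx
    obtain ⟨j, rfl⟩ := hsurj x hx
    exact ⟨j + 1, ⟨by omega, j.2⟩, he j j.2⟩

section Decompose

variable {N m : ℕ} {M : Diagram N} {w : Fin (m - 1) → ℕ}

theorem image_comap_corePos (hw : (Icc 1 m).image (corePos w) = endpoints (rootBlock M.arcs)) :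
    (M.comap m (corePos_strictMono w)).arcs.image (Prod.map (corePos w) (corePos w)) =
      rootBlock M.arcs := by
  ext b
  rw [mem_image]
  constructor
  · rintro ⟨a, ha, rfl⟩
    obtain ⟨hbd, hma⟩ := mem_comap.mp ha
    have : corePos w a.1 ∈ endpoints (rootBlock M.arcs) :=
      hw ▸ mem_image_of_mem _ (mem_Icc.mpr ⟨hbd.1, by omega⟩)
    obtain ⟨c, hc, hac⟩ := mem_endpoints.mp this
    rwa [M.eq_of_mem_of_mem hma (rootBlock_subset _ hc) (.inl rfl) hac]
  · intro hb
    have hend : ∀ x, x = b.1 ∨ x = b.2 → ∃ v ∈ Icc 1 m, corePos w v = x := fun x hx =>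
      mem_image.mp (hw ▸ mem_endpoints.mpr ⟨b, hb, hx⟩)
    obtain ⟨v₁, hv₁, h₁⟩ := hend _ (.inl rfl)
    obtain ⟨v₂, hv₂, h₂⟩ := hend _ (.inr rfl)
    have hb' := M.valid b (rootBlock_subset _ hb)
    rw [← h₁, ← h₂, (corePos_strictMono w).lt_iff_lt] at hb'
    rw [mem_Icc] at hv₁ hv₂
    have hmap : Prod.map (corePos w) (corePos w) (v₁, v₂) = b := Prod.ext h₁ h₂
    refine ⟨(v₁, v₂), mem_comap.mpr ⟨⟨hv₁.1, hb'.2.1, hv₂.2⟩, ?_⟩, hmap⟩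
    rw [hmap]
    exact rootBlock_subset _ hb

theorem inflate_comap_arcs (hw : (Icc 1 m).image (corePos w) = endpoints (rootBlock M.arcs))
    (hN : corePos w m = N) :
    (inflate w (M.comap m (corePos_strictMono w))
      fun i => M.comap (w i) (gapPos_strictMono w i)).arcs = M.arcs := by
  ext b
  rw [mem_inflate_arcs]
  constructor
  · rintro (⟨a, ha, rfl⟩ | ⟨i, a, ha, rfl⟩)
    exacts [(mem_comap.mp ha).2, (mem_comap.mp ha).2]
  · intro hb
    have hvb := M.valid b hb
    by_cases hbC : b ∈ rootBlock M.arcs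
    · rw [← image_comap_corePos hw, mem_image] at hbC
      exact .inl hbC
    rcases eq_corePos_or_mem_gap w hvb.1 (by omega) with ⟨v, hv, hv1⟩ | ⟨i, hi⟩
    · obtain ⟨c, hc, hbc⟩ := mem_endpoints.mp (hw ▸ mem_image.mpr ⟨v, hv, hv1.symm⟩)
      exact (hbC (M.eq_of_mem_of_mem hb (rootBlock_subset _ hc) (.inl rfl) hbc ▸ hc)).elim
    -- `b` starts in gap `i` and encloses no root-block vertex, so it ends in gap `i` as well
    · have hx : corePos w (i + 2) ∈ endpoints (rootBlock M.arcs) :=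
        hw ▸ mem_image_of_mem _ (mem_Icc.mpr ⟨by omega, by omega⟩)
      have hout := notMem_Icc_of_notMem_rootBlock hb hbC hx
      have hi₂ : b.2 ∈ gap w i := by
        simp only [gap, Set.mem_Ioo, Set.mem_Icc] at hi hout ⊢
        omega
      obtain ⟨e₁, ho₁⟩ := gapPos_sub w hi
      obtain ⟨e₂, ho₂⟩ := gapPos_sub w hi₂
      have hmap : Prod.map (gapPos w i) (gapPos w i) (b.1 - corePos w (i + 1),
          b.2 - corePos w (i + 1)) = b := Prod.ext e₁ e₂
      rw [mem_Icc] at ho₁ ho₂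
      refine .inr ⟨i, _, mem_comap.mpr ⟨⟨ho₁.1, ?_, ho₂.2⟩, by rwa [hmap]⟩, hmap⟩
      simp only [gap, Set.mem_Ioo] at hi
      omega

end Decompose

theorem exists_inflate_eq {N : ℕ} (M : Diagram N) (hN : 1 ≤ N) (hP : M.Perfect)
    (hI : M.Irreducible) :
    ∃ (h : ℕ) (w : Fin (2 * h - 1) → ℕ) (S : Diagram (2 * h)) (f : ∀ i, Diagram (w i))
      (hw : corePos w (2 * h) = N),
      1 ≤ h ∧ CrossConnected S.arcs ∧ (inflate w S f).cast hw = M := by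
  obtain ⟨r, hr, hr1⟩ := hP 1 le_rfl hN
  obtain ⟨t, ht, htN⟩ := hP N hN le_rfl
  replace hr1 : r.1 = 1 := by have := M.valid r hr; omega
  replace htN : t.2 = N := by have := M.valid t ht; omega
  set C := rootBlock M.arcs
  have hrC : r ∈ C := mem_rootBlock.mpr ⟨r, hr, hr1, .refl⟩
  have htC : t ∈ C := hI.mem_rootBlock hr hr1 ht htN
  have hVpos : ∀ x ∈ endpoints C, 1 ≤ x ∧ x ≤ N := fun x hx => by
    obtain ⟨c, hc, hxc⟩ := mem_endpoints.mp hx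
    have := M.valid c (rootBlock_subset _ hc)
    omega
  obtain ⟨w, hw⟩ := exists_image_corePos_eq (M.card_endpoints (rootBlock_subset _))
    (mem_endpoints.mpr ⟨r, hrC, .inl hr1.symm⟩) fun x hx => (hVpos x hx).1
  have hh : 1 ≤ C.card := card_pos.mpr ⟨r, hrC⟩
  have hwN : corePos w (2 * C.card) = N := by
    have hlast : corePos w (2 * C.card) ∈ endpoints C := by
      rw [← hw]
      exact mem_image_of_mem _ (mem_Icc.mpr ⟨by omega, le_rfl⟩)
    have := (hVpos _ hlast).2
    obtain ⟨v, hv, hvN⟩ := mem_image.mp (hw ▸ mem_endpoints.mpr ⟨t, htC, .inr htN.symm⟩)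
    have : corePos w v ≤ corePos w (2 * C.card) := (corePos_strictMono w).monotone (mem_Icc.mp hv).2
    omega
  refine ⟨C.card, w, M.comap _ (corePos_strictMono w), fun i => M.comap _ (gapPos_strictMono w i),
    hwN, hh, ?_, ext_arcs (inflate_comap_arcs hw hwN)⟩
  rw [← crossConnected_image_iff (corePos_strictMono w), image_comap_corePos hw]
  exact crossConnected_rootBlock M


theorem eq_of_image_Icc_eq {φ ψ : ℕ → ℕ} (hφ : StrictMono φ) (hψ : StrictMono ψ) {a b : ℕ}
    (h : (Icc 1 a).image φ = (Icc 1 b).image ψ) : a = b ∧ ∀ v ∈ Icc 1 a, φ v = ψ v := by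
  have hcard : ∀ {χ : ℕ → ℕ} (c : ℕ), StrictMono χ → ((Icc 1 c).image χ).card = c := fun c hχ => by
    rw [card_image_of_injective _ hχ.injective, Nat.card_Icc, Nat.add_sub_cancel]
  obtain rfl : a = b := (hcard a hφ).symm.trans (h ▸ hcard b hψ)
  have key : ∀ χ : ℕ → ℕ, StrictMono χ → (Icc 1 a).image χ = (Icc 1 a).image φ →
      (fun v : Fin a => χ (v + 1)) = ((Icc 1 a).image φ).orderEmbOfFin (hcard a hφ) :=
    fun χ hχ hχφ => orderEmbOfFin_unique _
      (fun v => hχφ ▸ mem_image_of_mem _ (mem_Icc.mpr ⟨by omega, v.2⟩))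
      fun v v' hvv' => hχ (by simpa using hvv')
  refine ⟨rfl, fun v hv => ?_⟩
  rw [mem_Icc] at hv
  have := congrFun ((key φ hφ rfl).trans (key ψ hψ h.symm).symm) ⟨v - 1, by omega⟩
  simpa [Nat.sub_add_cancel hv.1] using this

theorem eq_of_corePos_eq {m : ℕ} {w w' : Fin (m - 1) → ℕ}
    (h : ∀ v ∈ Icc 1 m, corePos w v = corePos w' v) : w = w' := by
  funext i
  have h₁ := h (i + 1) (mem_Icc.mpr ⟨by omega, by omega⟩)
  have h₂ := h (i + 2) (mem_Icc.mpr ⟨by omega, by omega⟩)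
  rw [corePos_gap, corePos_gap, h₁] at h₂
  omega

end Diagram

open Diagram Finset

abbrev Matching3 (m : ℕ) := {D : Diagram (2 * m) // D.Noncrossing 3 ∧ D.Perfect}

abbrev Core3 (h : ℕ) :=
  {S : Diagram (2 * h) // S.Noncrossing 3 ∧ S.Perfect ∧ CrossConnected S.arcs}

abbrev Filling3 (k m : ℕ) :=
  Σ l : finsuppAntidiag (univ : Finset (Fin k)) m, ∀ i, Matching3 (l.1 i)

abbrev Decomposition3 (n : ℕ) := Σ h : Icc 1 n, Core3 h × Filling3 (2 * h - 1) (n - h)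

abbrev IrrMatching3 (n : ℕ) :=
  {D : Diagram (2 * n) // D.Noncrossing 3 ∧ D.Perfect ∧ D.Irreducible}

theorem one_le_two_mul_of_mem_Icc {n h : ℕ} (hh : h ∈ Icc 1 n) : 1 ≤ 2 * h := by
  have := (mem_Icc.mp hh).1
  omega

theorem corePos_two_mul {n h : ℕ} (hh : h ∈ Icc 1 n)
    (l : finsuppAntidiag (univ : Finset (Fin (2 * h - 1))) (n - h)) :
    corePos (fun i => 2 * l.1 i) (2 * h) = 2 * n := by
  have := (mem_finsuppAntidiag.mp l.2).1
  rw [mem_Icc] at hh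
  rw [corePos_last _ (by omega), ← mul_sum, this]
  omega

def assemble {n : ℕ} : Decomposition3 n → IrrMatching3 n
  | ⟨⟨_, hh⟩, S, l, x⟩ =>
    ⟨(inflate (fun i => 2 * l.1 i) S.1 fun i => (x i).1).cast (corePos_two_mul hh l),
      inflate_noncrossing_iff.mpr ⟨S.2.1, fun i => (x i).2.1⟩,
      (perfect_cast_iff _ _).mpr (inflate_perfect_iff.mpr ⟨S.2.2.1, fun i => (x i).2.2⟩),
      inflate_irreducible (one_le_two_mul_of_mem_Icc hh) S.2.2.1 S.2.2.2⟩

theorem assemble_injective (n : ℕ) : Function.Injective (assemble (n := n)) := by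
  rintro ⟨⟨h, hh⟩, S, l, x⟩ ⟨⟨h', hh'⟩, S', l', x'⟩ heq
  have harcs : (inflate (fun i => 2 * l.1 i) S.1 fun i => (x i).1).arcs =
      (inflate (fun i => 2 * l'.1 i) S'.1 fun i => (x' i).1).arcs :=
    congrArg (fun D => D.1.arcs) heq
  have hcore := rootBlock_inflate (f := fun i => (x i).1) (one_le_two_mul_of_mem_Icc hh)
    S.2.2.1 S.2.2.2
  rw [harcs, rootBlock_inflate (one_le_two_mul_of_mem_Icc hh') S'.2.2.1 S'.2.2.2] at hcore
  have himg := congrArg endpoints hcore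
  rw [endpoints_image, endpoints_image, S.2.2.1.endpoints_eq, S'.2.2.1.endpoints_eq] at himg
  obtain ⟨hhh, hpos⟩ := eq_of_image_Icc_eq (corePos_strictMono _) (corePos_strictMono _) himg.symm
  obtain rfl : h = h' := Nat.eq_of_mul_eq_mul_left two_pos hhh
  obtain rfl : l = l' := by
    have hw := eq_of_corePos_eq hpos
    exact Subtype.ext (Finsupp.ext fun i => by have := congrFun hw i; simp only at this; omega)
  have hS : S = S' := Subtype.ext <| ext_arcs <| image_injective
    ((corePos_strictMono _).injective.prodMap (corePos_strictMono _).injective) hcore.symm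
  have hx : x = x' := funext fun i => Subtype.ext <| ext_arcs <| by
    have := congrArg (filter fun b => b.1 ∈ gap (fun j => 2 * l.1 j) i) harcs
    rw [filter_mem_gap_inflate, filter_mem_gap_inflate] at this
    exact image_injective
      ((gapPos_strictMono _ i).injective.prodMap (gapPos_strictMono _ i).injective) this
  subst hS hx
  rfl

theorem assemble_surjective {n : ℕ} (hn : 1 ≤ n) : Function.Surjective (assemble (n := n)) := by
  rintro ⟨M, hM3, hMP, hMI⟩
  obtain ⟨h, w, S, f, hw, hh, hcon, rfl⟩ := exists_inflate_eq M (by omega) hMP hMI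
  rw [perfect_cast_iff, inflate_perfect_iff] at hMP
  replace hM3 := inflate_noncrossing_iff.mp hM3
  have hwl : ∀ i, w i = 2 * (f i).arcs.card := fun i => (hMP.2 i).eq_two_mul_card
  have hsize : 2 * h + 2 * ∑ i, (f i).arcs.card = 2 * n := by
    rwa [corePos_last _ (by omega), sum_congr rfl fun i _ => hwl i, ← mul_sum] at hw
  let l : Fin (2 * h - 1) →₀ ℕ := Finsupp.equivFunOnFinite.symm fun i => (f i).arcs.card
  have hl : l ∈ finsuppAntidiag univ (n - h) := by
    rw [mem_finsuppAntidiag]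
    exact ⟨by simp only [l, Finsupp.coe_equivFunOnFinite_symm]; omega, subset_univ _⟩
  refine ⟨⟨⟨h, mem_Icc.mpr ⟨hh, by omega⟩⟩, ⟨S, hM3.1, hMP.1, hcon⟩, ⟨l, hl⟩,
    fun i => ⟨(f i).cast (hwl i), hM3.2 i, (perfect_cast_iff _ _).mpr (hMP.2 i)⟩⟩, ?_⟩
  refine Subtype.ext (ext_arcs ?_)
  show inflateArcs (fun i => 2 * l i) S.arcs (fun i => (f i).arcs) =
    inflateArcs w S.arcs fun i => (f i).arcs
  rw [show (fun i => 2 * l i) = w from funext fun i => (hwl i).symm]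

theorem card_core3_one : Nat.card (Core3 1) = 1 := by
  have harcs : ∀ D : Diagram (2 * 1), D.Perfect → D.arcs = {(1, 2)} := by
    intro D hP
    have hall : ∀ b ∈ D.arcs, b = (1, 2) := fun b hb => by
      have := D.valid b hb
      exact Prod.ext (show b.1 = 1 by omega) (show b.2 = 2 by omega)
    obtain ⟨a, ha, -⟩ := hP 1 le_rfl (by norm_num)
    exact eq_singleton_iff_unique_mem.mpr ⟨hall a ha ▸ ha, hall⟩
  let D₀ : Diagram (2 * 1) := ⟨{(1, 2)}, by simp, by simp⟩
  have hD₀ : D₀.Perfect := fun v hv1 hv2 => ⟨(1, 2), mem_singleton_self _, by omega⟩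
  rw [Nat.card_eq_one_iff_unique]
  refine ⟨⟨fun D E => Subtype.ext (ext_arcs ((harcs _ D.2.2.1).trans (harcs _ E.2.2.1).symm))⟩,
    ⟨⟨D₀, ?_, hD₀, ?_⟩⟩⟩
  · rintro ⟨a, ha, hcr, -⟩
    have h01 := hcr 0 1 (by decide)
    rw [mem_singleton.mp (ha 0), mem_singleton.mp (ha 1)] at h01
    exact lt_irrefl _ h01
  · intro a ha b hb
    rw [mem_singleton.mp ha, mem_singleton.mp hb]

theorem card_core3 {h : ℕ} (hh : 1 ≤ h) : Nat.card (Core3 h) = Scount h := by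
  rcases hh.eq_or_lt with rfl | h2
  · rw [card_core3_one, Scount, if_pos le_rfl]
  rw [Scount, if_neg (by omega)]
  refine Nat.card_congr (Equiv.subtypeEquivRight fun D => and_congr_right fun _ =>
    and_congr_right fun hP => (isSkeleton_iff ?_).symm)
  have := hP.eq_two_mul_card
  omega

theorem card_filling3 (k m : ℕ) :
    (Nat.card (Filling3 k m) : ℚ) = PowerSeries.coeff m (Fgf 3 ^ k) := by
  rw [Nat.card_sigma, ← Fin.prod_const, PowerSeries.coeff_prod,
    ← sum_coe_sort (univ.finsuppAntidiag m)]
  push_cast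
  refine sum_congr rfl fun l _ => ?_
  rw [Nat.card_pi]
  push_cast
  exact prod_congr rfl fun i _ => by rw [Fgf, PowerSeries.coeff_mk]; rfl

theorem card_decomposition3 (n : ℕ) :
    (Nat.card (Decomposition3 n) : ℚ) =
      ∑ h ∈ Icc 1 n, (Scount h : ℚ) * PowerSeries.coeff (n - h) (Fgf 3 ^ (2 * h - 1)) := by
  rw [Nat.card_sigma, ← sum_coe_sort (Icc 1 n)]
  push_cast
  refine sum_congr rfl fun h _ => ?_
  rw [Nat.card_prod, card_core3 (mem_Icc.mp h.2).1]
  push_cast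
  rw [card_filling3]

theorem irrCount_zero : IrrCount 0 = 1 := by
  have harcs : ∀ D : Diagram (2 * 0), D.arcs = ∅ := fun D =>
    eq_empty_of_forall_notMem fun a ha => by have := D.valid a ha; omega
  let D₀ : Diagram (2 * 0) := ⟨∅, by simp, by simp⟩
  rw [IrrCount, Nat.card_eq_one_iff_unique]
  refine ⟨⟨fun D E => Subtype.ext (ext_arcs ((harcs _).trans (harcs _).symm))⟩,
    ⟨⟨D₀, ?_, fun v hv1 hv2 => by omega, ?_⟩⟩⟩
  · rintro ⟨a, ha, -⟩
    exact notMem_empty _ (ha 0)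
  · rintro ⟨ℓ, ⟨a, ha, -⟩, -⟩
    exact notMem_empty _ ha

end

/-- `Irr(z) = 1 + Σ_{h ≥ 1} S(h) z^h F_3(z)^{2h-1}`: the constant
coefficient of `Irr` is 1 and for `n ≥ 1` the coefficient of `zⁿ` equals
`Σ_{h=1}^{n} S(h) · [z^{n-h}] F_3(z)^{2h-1}`. -/
theorem irr_eq_skeleton_sum :
    (IrrCount 0 : ℚ) = 1 ∧
    ∀ n : ℕ, 1 ≤ n →
      (IrrCount n : ℚ) =
        ∑ h ∈ Finset.Icc 1 n, (Scount h : ℚ) *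
          PowerSeries.coeff (n - h) ((Fgf 3) ^ (2 * h - 1)) := by
  refine ⟨by rw [irrCount_zero]; norm_num, fun n hn => ?_⟩
  rw [IrrCount, ← Nat.card_eq_of_bijective _ ⟨assemble_injective n, assemble_surjective hn⟩,
    card_decomposition3]
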